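/- Let u be a run and 𝔹 a liberally atomic set of valid blocks of u, inducing the block-happens-before order ≺_𝔹. If u ≡_𝔹 v, then v is a proper linearization of ≺_𝔹 (hence u ≊_𝔹 v). -/
import Mathlib


namespace TraceTheory

inductive Op : Type
  | rd : Op
  | wr : Op
deriving DecidableEq

structure Lbl (T X : Type) : Type where
  thread : T
  op : Op
  var : X
deriving DecidableEq

/-- A concurrent program run: a finite string over the concurrent alphabet. -/
abbrev Run (T X : Type) := List (Lbl T X)

/-- An event of a run: a symbol together with its occurrence number. -/
abbrev Event (T X : Type) := Lbl T X × ℕ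

variable {T X : Type} [DecidableEq T] [DecidableEq X]

/-- Dependence: same thread, or same variable with at least one write. -/
def Dep (a b : Lbl T X) : Prop :=
  a.thread = b.thread ∨ (a.var = b.var ∧ (a.op = Op.wr ∨ b.op = Op.wr))

/-- The event at position `i` of run `w`. -/
def evAt (w : Run T X) (i : Fin w.length) : Event T X :=
  (w.get i, (w.take (i : ℕ)).count (w.get i))

def HasEv (w : Run T X) (e : Event T X) : Prop := ∃ i : Fin w.length, evAt w i = e

/-- `e` occurs (strictly) before `f` in `w`. -/
def EvBefore (w : Run T X) (e f : Event T X) : Prop :=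
  ∃ i j : Fin w.length, (i : ℕ) < (j : ℕ) ∧ evAt w i = e ∧ evAt w j = f

/-- Program order. -/
def po (w : Run T X) (e f : Event T X) : Prop :=
  e.1.thread = f.1.thread ∧ EvBefore w e f

/-- Reads-from: `f` is a read that observes the write `e` (the last write on
the same variable before `f`). -/
def rf (w : Run T X) (e f : Event T X) : Prop :=
  e.1.op = Op.wr ∧ f.1.op = Op.rd ∧ e.1.var = f.1.var ∧
  ∃ i j : Fin w.length, evAt w i = e ∧ evAt w j = f ∧ (i : ℕ) < (j : ℕ) ∧
    ∀ k : Fin w.length, (i : ℕ) < (k : ℕ) → (k : ℕ) < (j : ℕ) →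
      ¬ ((w.get k).op = Op.wr ∧ (w.get k).var = f.1.var)

/-- Every read is preceded by a write on the same variable. -/
def WellFormed (w : Run T X) : Prop :=
  ∀ j : Fin w.length, (w.get j).op = Op.rd →
    ∃ i : Fin w.length, (i : ℕ) < (j : ℕ) ∧ (w.get i).op = Op.wr ∧
      (w.get i).var = (w.get j).var

/-- Reads-from equivalence. -/
def RfEquiv (w w' : Run T X) : Prop :=
  w.Perm w' ∧ po w = po w' ∧ rf w = rf w'

/-- A single Mazurkiewicz swap of two adjacent independent symbols. -/
inductive MazSwap : Run T X → Run T X → Prop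
  | swap (u v : Run T X) (a b : Lbl T X) (h : ¬ Dep a b) :
      MazSwap (u ++ a :: b :: v) (u ++ b :: a :: v)

/-- Trace (Mazurkiewicz) equivalence: the smallest equivalence closed under swaps. -/
def MazEquiv (w w' : Run T X) : Prop := Relation.EqvGen MazSwap w w'

/-- The trace (happens-before) partial order of a run. -/
def MazOrder (w : Run T X) : Event T X → Event T X → Prop :=
  Relation.TransGen (fun e f => EvBefore w e f ∧ Dep e.1 f.1)

/-- `B` is a block word (one write followed by reads of the same variable) that is
valid as a contiguous segment whose suffix (remainder of the run) is `s`: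
no read after the block reads from the block's write. -/
def ValidBlockSeg (B s : Run T X) : Prop :=
  ∃ a rest, B = a :: rest ∧ a.op = Op.wr ∧
    (∀ b ∈ rest, b.op = Op.rd ∧ b.var = a.var) ∧
    ∀ j : Fin s.length, (s.get j).op = Op.rd → (s.get j).var = a.var →
      ∃ m : Fin s.length, (m : ℕ) < (j : ℕ) ∧ (s.get m).op = Op.wr ∧
        (s.get m).var = a.var

def ThreadsDisjoint (B B' : Run T X) : Prop :=
  ∀ a ∈ B, ∀ b ∈ B', a.thread ≠ b.thread

/-- A single block-equivalence step (clause (i): block swap, clause (ii): event swap). -/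
inductive BlkSwap : Run T X → Run T X → Prop
  | block (p B B' s : Run T X) (hB : ValidBlockSeg B (B' ++ s)) (hB' : ValidBlockSeg B' s)
      (hd : ThreadsDisjoint B B') :
      BlkSwap (p ++ B ++ B' ++ s) (p ++ B' ++ B ++ s)
  | single (p s : Run T X) (a b : Lbl T X) (ht : a.thread ≠ b.thread)
      (h : a.var ≠ b.var ∨ (a.op = Op.rd ∧ b.op = Op.rd)) :
      BlkSwap (p ++ a :: b :: s) (p ++ b :: a :: s)

/-- Block equivalence: smallest reflexive transitive relation closed under the swaps. -/
def BlkEquiv : Run T X → Run T X → Prop := Relation.ReflTransGen BlkSwap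

/-- The set of events of the segment `B` of a run, given the prefix `p` preceding it. -/
def segEvents (p B : Run T X) : Set (Event T X) :=
  { e | ∃ i : Fin B.length, e = (B.get i, ((p ++ B.take (i : ℕ)).count (B.get i))) }

/-- Block-equivalence steps where block swaps are restricted to blocks from `𝔹`. -/
inductive BlkSwapIn (𝔹 : Set (Set (Event T X))) : Run T X → Run T X → Prop
  | block (p B B' s : Run T X) (hB : ValidBlockSeg B (B' ++ s)) (hB' : ValidBlockSeg B' s)
      (hBmem : segEvents p B ∈ 𝔹) (hB'mem : segEvents (p ++ B) B' ∈ 𝔹)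
      (hd : ThreadsDisjoint B B') :
      BlkSwapIn 𝔹 (p ++ B ++ B' ++ s) (p ++ B' ++ B ++ s)
  | single (p s : Run T X) (a b : Lbl T X) (ht : a.thread ≠ b.thread)
      (h : a.var ≠ b.var ∨ (a.op = Op.rd ∧ b.op = Op.rd)) :
      BlkSwapIn 𝔹 (p ++ a :: b :: s) (p ++ b :: a :: s)

/-- Block equivalence restricted to the set of blocks `𝔹`. -/
def BlkEquivIn (𝔹 : Set (Set (Event T X))) : Run T X → Run T X → Prop :=
  Relation.ReflTransGen (BlkSwapIn 𝔹)

/-- A valid block of `w` (as a set of events): a write event together with exactly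
the reads of `w` that read from it. -/
def IsValidBlockOf (w : Run T X) (S : Set (Event T X)) : Prop :=
  ∃ e : Event T X, HasEv w e ∧ e.1.op = Op.wr ∧ S = insert e { f | rf w e f }

def ValidBlocks (w : Run T X) (𝔹 : Set (Set (Event T X))) : Prop :=
  ∀ S ∈ 𝔹, IsValidBlockOf w S

/-- Block `S` occurs as a contiguous subword of `u`. -/
def SerialIn (u : Run T X) (S : Set (Event T X)) : Prop :=
  ∃ p B s, u = p ++ B ++ s ∧ segEvents p B = S

/-- Liberal atomicity of a run `v` with respect to a set of blocks `𝔹`. -/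
def LiberallyAtomic (v : Run T X) (𝔹 : Set (Set (Event T X))) : Prop :=
  ∃ u, BlkEquivIn 𝔹 u v ∧ ∀ S ∈ 𝔹, SerialIn u S

/-- Conflict serializability of a run `v` with respect to a set of blocks `𝔹`. -/
def ConflictSerializable (v : Run T X) (𝔹 : Set (Set (Event T X))) : Prop :=
  ∃ u, MazEquiv u v ∧ ∀ S ∈ 𝔹, SerialIn u S

/-- The block-happens-before order `≺_𝔹`. -/
def Bhb (w : Run T X) (𝔹 : Set (Set (Event T X))) : Event T X → Event T X → Prop :=
  Relation.TransGen (fun e f =>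
    EvBefore w e f ∧ Dep e.1 f.1 ∧
    ¬ (e.1.thread ≠ f.1.thread ∧ ∃ B ∈ 𝔹, ∃ B' ∈ 𝔹, B ≠ B' ∧ e ∈ B ∧ f ∈ B'))

/-- The saturated order `⪻_𝔹` on events (`Sum.inl`) and blocks (`Sum.inr`). -/
inductive Sat (w : Run T X) (𝔹 : Set (Set (Event T X))) :
    (Event T X ⊕ Set (Event T X)) → (Event T X ⊕ Set (Event T X)) → Prop
  | base {e f : Event T X} : Bhb w 𝔹 e f → Sat w 𝔹 (Sum.inl e) (Sum.inl f)
  | toBlk {e f : Event T X} {B B' : Set (Event T X)} :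
      e.1.var = f.1.var → B ∈ 𝔹 → B' ∈ 𝔹 → e ∈ B → f ∈ B' → B ≠ B' →
      Sat w 𝔹 (Sum.inl e) (Sum.inl f) → Sat w 𝔹 (Sum.inr B) (Sum.inr B')
  | ofBlk {B B' : Set (Event T X)} {e f : Event T X} :
      Sat w 𝔹 (Sum.inr B) (Sum.inr B') → e ∈ B → f ∈ B' →
      Sat w 𝔹 (Sum.inl e) (Sum.inl f)

/-- The event part of the saturated order `⪻_𝔹`. -/
def SatEv (w : Run T X) (𝔹 : Set (Set (Event T X))) (e f : Event T X) : Prop :=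
  Sat w 𝔹 (Sum.inl e) (Sum.inl f)

def SameVarBlocks (B B' : Set (Event T X)) : Prop :=
  ∃ x : X, (∀ e ∈ B, e.1.var = x) ∧ (∀ e ∈ B', e.1.var = x)

/-- No two distinct blocks of `𝔹` on the same variable overlap in `v`. -/
def NoOverlap (v : Run T X) (𝔹 : Set (Set (Event T X))) : Prop :=
  ∀ B ∈ 𝔹, ∀ B' ∈ 𝔹, B ≠ B' → SameVarBlocks B B' →
    (∀ e ∈ B, ∀ f ∈ B', EvBefore v e f) ∨ (∀ e ∈ B, ∀ f ∈ B', EvBefore v f e)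

/-- `v` is a proper linearization (of the events of `w`) of the order `ord`. -/
def ProperLin (w : Run T X) (𝔹 : Set (Set (Event T X)))
    (ord : Event T X → Event T X → Prop) (v : Run T X) : Prop :=
  w.Perm v ∧ (∀ e f, ord e f → EvBefore v e f) ∧ NoOverlap v 𝔹


/-- `e` is causally ordered before `f` under reads-from equivalence:
`e` occurs before `f` in every reads-from equivalent run. -/
def CausOrd (w : Run T X) (e f : Event T X) : Prop :=
  ∀ w', RfEquiv w w' → EvBefore w' e f

/-- `e` and `f` are causally concurrent under reads-from equivalence. -/
def CausConc (w : Run T X) (e f : Event T X) : Prop :=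
  ¬ CausOrd w e f ∧ ¬ CausOrd w f e


section Aux
variable {T X : Type} [DecidableEq T] [DecidableEq X]

theorem count_take_lt {l : Run T X} {i j : ℕ} (hij : i < j) (hj : j ≤ l.length) :
    (l.take i).count (l[i]'(lt_of_lt_of_le hij hj)) <
      (l.take j).count (l[i]'(lt_of_lt_of_le hij hj)) := by
  have hi : i < l.length := lt_of_lt_of_le hij hj
  have h1 : l.take j = l.take (i+1) ++ (l.drop (i+1)).take (j - (i+1)) := by
    rw [← List.take_add]; congr 1; omega
  have h2 : l.take (i+1) = l.take i ++ [l[i]] := by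
    rw [List.take_succ]; simp [List.getElem?_eq_getElem hi]
  rw [h1, h2, List.count_append, List.count_append]
  simp
  omega

theorem evAt_inj_lt {w : Run T X} {i j : Fin w.length} (hij : (i:ℕ) < (j:ℕ)) :
    evAt w i ≠ evAt w j := by
  intro h
  unfold evAt at h
  have hlab : w.get i = w.get j := congrArg Prod.fst h
  have hcnt : (w.take (i:ℕ)).count (w.get i) = (w.take (j:ℕ)).count (w.get j) :=
    congrArg Prod.snd h
  rw [← hlab] at hcnt
  have := count_take_lt (l := w) hij (le_of_lt j.isLt)
  simp only [List.get_eq_getElem] at hcnt hlab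
  omega

theorem evAt_inj {w : Run T X} {i j : Fin w.length} (h : evAt w i = evAt w j) : i = j := by
  rcases lt_trichotomy (i:ℕ) (j:ℕ) with hlt | heq | hlt
  · exact absurd h (evAt_inj_lt hlt)
  · exact Fin.ext heq
  · exact absurd h.symm (evAt_inj_lt hlt)

theorem evBefore_trans {w : Run T X} {e f g : Event T X}
    (h1 : EvBefore w e f) (h2 : EvBefore w f g) : EvBefore w e g := by
  obtain ⟨i, j, hij, he, hf⟩ := h1
  obtain ⟨i', j', hij', hf', hg⟩ := h2
  have : j = i' := evAt_inj (hf.trans hf'.symm)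
  exact ⟨i, j', by omega, he, hg⟩

theorem evAt_master {w p B t : Run T X} (hw : w = p ++ B ++ t) {i k : ℕ} (hi : i < B.length)
    (hk : k = p.length + i) (hlt : k < w.length) :
    evAt w ⟨k, hlt⟩ = (B[i], (p ++ B.take i).count B[i]) := by
  subst hw; subst hk
  have hpb : p.length + i < (p ++ B).length := by simp; omega
  have hget : (p ++ B ++ t).get ⟨p.length + i, hlt⟩ = B[i] := by
    rw [List.get_eq_getElem, List.getElem_append_left hpb,
      List.getElem_append_right (by omega)]
    congr 1; omega
  have htake : (p ++ B ++ t).take (p.length + i) = p ++ B.take i := by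
    rw [List.take_append, List.take_append]
    have h1 : p.take (p.length + i) = p := List.take_of_length_le (by omega)
    have h2 : t.take (p.length + i - (p ++ B).length) = [] := by
      have : p.length + i - (p ++ B).length = 0 := by simp; omega
      rw [this, List.take_zero]
    rw [h1, h2]
    simp only [List.append_nil]
    congr 2
    omega
  rw [evAt, hget, htake]


theorem mem_segEvents {p B : Run T X} {e : Event T X} :
    e ∈ segEvents p B ↔ ∃ (i : ℕ) (_ : i < B.length), e = (B[i], (p ++ B.take i).count B[i]) := by
  constructor
  · rintro ⟨i, rfl⟩
    exact ⟨i, i.isLt, by simp [List.get_eq_getElem]⟩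
  · rintro ⟨i, h, rfl⟩
    exact ⟨⟨i, h⟩, by simp [List.get_eq_getElem]⟩

theorem segEvents_label {p B : Run T X} {e : Event T X} (he : e ∈ segEvents p B) :
    e.1 ∈ B := by
  obtain ⟨i, hi, rfl⟩ := mem_segEvents.1 he
  exact List.getElem_mem hi

theorem evAt_mem_segEvents {w p B t : Run T X} (hw : w = p ++ B ++ t) {i k : ℕ}
    (hi : i < B.length) (hk : k = p.length + i) (hlt : k < w.length) :
    evAt w ⟨k, hlt⟩ ∈ segEvents p B := by
  rw [evAt_master hw hi hk]
  exact mem_segEvents.2 ⟨i, hi, rfl⟩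

theorem segEvents_mem_evAt {w p B t : Run T X} (hw : w = p ++ B ++ t) {e : Event T X}
    (he : e ∈ segEvents p B) :
    ∃ (i : ℕ) (hi : i < B.length) (hlt : p.length + i < w.length),
      e = evAt w ⟨p.length + i, hlt⟩ := by
  obtain ⟨i, hi, rfl⟩ := mem_segEvents.1 he
  have hlt : p.length + i < w.length := by subst hw; simp; omega
  exact ⟨i, hi, hlt, (evAt_master hw hi rfl hlt).symm⟩

theorem segEvents_shift {p M B : Run T X} (h : ∀ l ∈ B, l ∉ M) :
    segEvents (p ++ M) B = segEvents p B := by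
  have key : ∀ (i : ℕ) (hi : i < B.length),
      ((p ++ M) ++ B.take i).count B[i] = (p ++ B.take i).count B[i] := by
    intro i hi
    have h0 : M.count B[i] = 0 := List.count_eq_zero_of_not_mem (h _ (List.getElem_mem hi))
    simp [List.count_append, h0]
  ext e
  simp only [mem_segEvents]
  constructor
  · rintro ⟨i, hi, rfl⟩; exact ⟨i, hi, by rw [key i hi]⟩
  · rintro ⟨i, hi, rfl⟩; exact ⟨i, hi, by rw [key i hi]⟩

theorem seg_before {w p B B' s : Run T X} (hw : w = p ++ B ++ B' ++ s) {e f : Event T X}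
    (he : e ∈ segEvents p B) (hf : f ∈ segEvents (p ++ B) B') : EvBefore w e f := by
  obtain ⟨i, hi, hlt, he⟩ :=
    segEvents_mem_evAt (w := w) (t := B' ++ s) (by rw [hw]; simp [List.append_assoc]) he
  obtain ⟨j, hj, hlt', hf⟩ := segEvents_mem_evAt (w := w) (t := s) hw hf
  exact ⟨⟨_, hlt⟩, ⟨_, hlt'⟩, by simp; omega, he.symm, hf.symm⟩

def sw (n m m' k : ℕ) : ℕ :=
  if k < n then k else if k < n + m then k + m' else if k < n + m + m' then k - m else k

theorem sw_lt {n m m' q k : ℕ} (h : k < n + m + m' + q) : sw n m m' k < n + m' + m + q := by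
  unfold sw; split_ifs <;> omega

theorem sw_mono {n m m' q i j : ℕ} (hij : i < j) (hj : j < n + m + m' + q)
    (hnot : ¬ (n ≤ i ∧ i < n + m ∧ n + m ≤ j ∧ j < n + m + m')) :
    sw n m m' i < sw n m m' j := by
  unfold sw; split_ifs <;> omega

theorem evAt_sw {p B B' s : Run T X} (hdisj : ∀ a ∈ B, a ∉ B') {k : ℕ}
    (hk : k < (p ++ B ++ B' ++ s).length) :
    ∃ hk' : sw p.length B.length B'.length k < (p ++ B' ++ B ++ s).length,
      evAt (p ++ B ++ B' ++ s) ⟨k, hk⟩ =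
        evAt (p ++ B' ++ B ++ s) ⟨sw p.length B.length B'.length k, hk'⟩ := by
  have hlen : (p ++ B ++ B' ++ s).length = p.length + B.length + B'.length + s.length := by
    simp; omega
  have hlen' : (p ++ B' ++ B ++ s).length = p.length + B'.length + B.length + s.length := by
    simp; omega
  have hk2 : k < p.length + B.length + B'.length + s.length := hlen ▸ hk
  have hk' : sw p.length B.length B'.length k < (p ++ B' ++ B ++ s).length := by
    rw [hlen']; exact sw_lt hk2
  refine ⟨hk', ?_⟩
  rcases Nat.lt_or_ge k p.length with h1 | h1
  · have hs : sw p.length B.length B'.length k = k := by unfold sw; split_ifs <;> omega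
    rw [evAt_master (p := ([] : Run T X)) (B := p) (t := B ++ B' ++ s)
        (by simp [List.append_assoc]) h1 (by simp) hk]
    conv_rhs => rw [evAt_master (p := ([] : Run T X)) (B := p) (t := B' ++ B ++ s)
        (by simp [List.append_assoc]) (by omega : k - 0 < p.length) (by rw [hs]; simp) hk']
    simp
  rcases Nat.lt_or_ge k (p.length + B.length) with h2 | h2
  · -- B region
    have hi : k - p.length < B.length := by omega
    have hs : sw p.length B.length B'.length k = k + B'.length := by unfold sw; split_ifs <;> omega
    have h0 : B'.count (B[k - p.length]) = 0 :=
      List.count_eq_zero_of_not_mem (hdisj _ (List.getElem_mem hi))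
    rw [evAt_master (p := p) (B := B) (t := B' ++ s)
        (by simp [List.append_assoc]) hi (by omega) hk]
    conv_rhs => rw [evAt_master (p := p ++ B') (B := B) (t := s)
        (by simp [List.append_assoc]) hi (by rw [hs]; simp only [List.length_append]; omega) hk']
    simp [List.count_append, h0]
  rcases Nat.lt_or_ge k (p.length + B.length + B'.length) with h3 | h3
  · -- B' region
    have hi : k - (p.length + B.length) < B'.length := by omega
    have hs : sw p.length B.length B'.length k = k - B.length := by unfold sw; split_ifs <;> omega
    have h0 : B.count (B'[k - (p.length + B.length)]) = 0 := by
      apply List.count_eq_zero_of_not_mem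
      intro hmem
      exact hdisj _ hmem (List.getElem_mem hi)
    rw [evAt_master (p := p ++ B) (B := B') (t := s)
        (by simp [List.append_assoc]) hi (by simp; omega) hk]
    conv_rhs => rw [evAt_master (p := p) (B := B') (t := B ++ s)
        (by simp [List.append_assoc]) (hi) (by rw [hs]; omega) hk']
    simp [List.count_append, h0]
  · -- s region
    have hi : k - (p.length + B.length + B'.length) < s.length := by omega
    have hs : sw p.length B.length B'.length k = k := by unfold sw; split_ifs <;> omega
    rw [evAt_master (p := p ++ B ++ B') (B := s) (t := ([] : Run T X))
        (by simp [List.append_assoc]) hi (by simp; omega) hk]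
    conv_rhs => rw [evAt_master (p := p ++ B' ++ B) (B := s) (t := ([] : Run T X))
        (by simp [List.append_assoc]) (hi) (by rw [hs]; simp only [List.length_append]; omega) hk']
    simp [List.count_append]
    omega

theorem swap_main {w w' p B B' s : Run T X}
    (hw : w = p ++ B ++ B' ++ s) (hw' : w' = p ++ B' ++ B ++ s)
    (hdisj : ∀ a ∈ B, a ∉ B') {e f : Event T X} (h : EvBefore w e f) :
    EvBefore w' e f ∨ (e ∈ segEvents p B ∧ f ∈ segEvents (p ++ B) B') := by
  subst hw; subst hw'
  obtain ⟨⟨iv, hiv⟩, ⟨jv, hjv⟩, hij, he, hf⟩ := h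
  simp only at hij
  have hlen : (p ++ B ++ B' ++ s).length = p.length + B.length + B'.length + s.length := by
    simp; omega
  by_cases hreg : p.length ≤ iv ∧ iv < p.length + B.length ∧
      p.length + B.length ≤ jv ∧ jv < p.length + B.length + B'.length
  · right
    constructor
    · rw [← he]
      exact evAt_mem_segEvents (t := B' ++ s) (by simp [List.append_assoc])
        (i := iv - p.length) (by omega) (by omega) hiv
    · rw [← hf]
      exact evAt_mem_segEvents (p := p ++ B) (t := s) rfl
        (i := jv - (p.length + B.length)) (by omega) (by simp; omega) hjv
  · left
    obtain ⟨hi', hei⟩ := evAt_sw hdisj hiv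
    obtain ⟨hj', hej⟩ := evAt_sw hdisj hjv
    refine ⟨⟨_, hi'⟩, ⟨_, hj'⟩, ?_, by rw [← hei]; exact he, by rw [← hej]; exact hf⟩
    simp only
    exact sw_mono hij (hlen ▸ hjv) hreg


theorem evAt_fst {u : Run T X} {i : Fin u.length} {e : Event T X} (h : evAt u i = e) :
    u.get i = e.1 := by
  have := congrArg Prod.fst h
  simpa [evAt] using this

theorem rf_evBefore {u : Run T X} {e f : Event T X} (h : rf u e f) : EvBefore u e f := by
  obtain ⟨_, _, _, i, j, he, hf, hij, _⟩ := h
  exact ⟨i, j, hij, he, hf⟩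

theorem rf_unique {u : Run T X} {e e' f : Event T X} (h : rf u e f) (h' : rf u e' f) :
    e = e' := by
  obtain ⟨hw, hr, hv, i, j, he, hf, hij, hno⟩ := h
  obtain ⟨hw', hr', hv', i', j', he', hf', hij', hno'⟩ := h'
  have hjj : j = j' := evAt_inj (hf.trans hf'.symm)
  subst hjj
  rcases lt_trichotomy (i:ℕ) (i':ℕ) with hlt | heqq | hlt
  · exact absurd ⟨(evAt_fst he').symm ▸ hw', (evAt_fst he').symm ▸ hv'⟩ (hno i' hlt hij')
  · rw [← he, ← he']; congr 1; exact Fin.ext heqq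
  · exact absurd ⟨(evAt_fst he).symm ▸ hw, (evAt_fst he).symm ▸ hv⟩ (hno' i hlt hij)

theorem valid_inter {u : Run T X} {C C' : Set (Event T X)}
    (hC : IsValidBlockOf u C) (hC' : IsValidBlockOf u C')
    {g : Event T X} (hg : g ∈ C) (hg' : g ∈ C') : C = C' := by
  obtain ⟨e, _, hw, rfl⟩ := hC
  obtain ⟨e', _, hw', rfl⟩ := hC'
  rcases Set.mem_insert_iff.1 hg with h1 | h1 <;> rcases Set.mem_insert_iff.1 hg' with h2 | h2
  · rw [h1.symm.trans h2]
  · exact absurd (hw.symm.trans (h1 ▸ h2.2.1)) (by simp)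
  · exact absurd (hw'.symm.trans (h2 ▸ h1.2.1)) (by simp)
  · rw [rf_unique h1 h2]

theorem block_before {u : Run T X} {e e' : Event T X} {i i' : Fin u.length}
    (he : evAt u i = e) (he' : evAt u i' = e') (hii : (i:ℕ) < (i':ℕ))
    (hw' : e'.1.op = Op.wr) (hvar : e.1.var = e'.1.var) :
    ∀ c ∈ insert e {f | rf u e f}, ∀ c' ∈ insert e' {f | rf u e' f}, EvBefore u c c' := by
  have hC : ∀ c ∈ insert e {f | rf u e f},
      ∃ j : Fin u.length, evAt u j = c ∧ (j:ℕ) < (i':ℕ) := by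
    intro c hc
    rcases Set.mem_insert_iff.1 hc with rfl | hrf
    · exact ⟨i, he, hii⟩
    · obtain ⟨hwE, hrd, hv, a, b, ha, hb, hab, hno⟩ := hrf
      have hai : a = i := evAt_inj (ha.trans he.symm)
      subst hai
      refine ⟨b, hb, ?_⟩
      by_contra hge
      push_neg at hge
      rcases Nat.eq_or_lt_of_le hge with heqq | hlt
      · have : e' = c := by
          rw [← he', ← hb]; congr 1; exact Fin.ext heqq
        rw [this] at hw'
        exact absurd (hw'.symm.trans hrd) (by simp)
      · refine hno i' hii hlt ⟨(evAt_fst he') ▸ hw', ?_⟩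
        rw [evAt_fst he', ← hvar, hv]
  have hC' : ∀ c' ∈ insert e' {f | rf u e' f},
      ∃ j : Fin u.length, evAt u j = c' ∧ (i':ℕ) ≤ (j:ℕ) := by
    intro c' hc'
    rcases Set.mem_insert_iff.1 hc' with rfl | hrf
    · exact ⟨i', he', le_refl _⟩
    · obtain ⟨hwE, hrd, hv, a, b, ha, hb, hab, hno⟩ := hrf
      have hai : a = i' := evAt_inj (ha.trans he'.symm)
      subst hai
      exact ⟨b, hb, le_of_lt hab⟩
  intro c hc c' hc'
  obtain ⟨j, hj, hji⟩ := hC c hc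
  obtain ⟨j', hj', hij'⟩ := hC' c' hc'
  exact ⟨j, j', by omega, hj, hj'⟩

theorem noOverlap_base {u : Run T X} {𝔹 : Set (Set (Event T X))}
    (hval : ValidBlocks u 𝔹) : NoOverlap u 𝔹 := by
  intro C hC C' hC' hne hsv
  obtain ⟨e, ⟨i, hi⟩, hw, rfl⟩ := hval C hC
  obtain ⟨e', ⟨i', hi'⟩, hw', rfl⟩ := hval C' hC'
  obtain ⟨x, hx, hx'⟩ := hsv
  have hvar : e.1.var = e'.1.var := by
    rw [hx e (Set.mem_insert _ _), hx' e' (Set.mem_insert _ _)]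
  have hii : (i:ℕ) ≠ (i':ℕ) := by
    intro h
    apply hne
    have : e = e' := by rw [← hi, ← hi']; congr 1; exact Fin.ext h
    rw [this]
  rcases Nat.lt_or_ge (i:ℕ) (i':ℕ) with hlt | hge
  · exact Or.inl (block_before hi hi' hlt hw' hvar)
  · exact Or.inr (fun c hc c' hc' =>
      block_before hi' hi (by omega) hw hvar.symm c' hc' c hc)

theorem bhb_evBefore {u : Run T X} {𝔹 : Set (Set (Event T X))} {e f : Event T X}
    (h : Bhb u 𝔹 e f) : EvBefore u e f := by
  induction h with
  | single h => exact h.1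
  | tail _ h ih => exact evBefore_trans ih h.1

theorem perm_swap4 (p B B' s : Run T X) :
    (p ++ B ++ B' ++ s).Perm (p ++ B' ++ B ++ s) := by
  have h : (B ++ B').Perm (B' ++ B) := List.perm_append_comm
  have := (h.append_right s).append_left p
  simpa [List.append_assoc] using this


theorem step_preserve {u : Run T X} {𝔹 : Set (Set (Event T X))} (hval : ValidBlocks u 𝔹)
    {w w' : Run T X} (hstep : BlkSwapIn 𝔹 w w')
    (hperm : u.Perm w) (hbhb : ∀ e f, Bhb u 𝔹 e f → EvBefore w e f) (hno : NoOverlap w 𝔹) :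
    u.Perm w' ∧ (∀ e f, Bhb u 𝔹 e f → EvBefore w' e f) ∧ NoOverlap w' 𝔹 := by
  cases hstep with
  | block p B B' s hB hB' hBmem hB'mem hd =>
    have hLD : ∀ a ∈ B, a ∉ B' := fun a ha hb => hd a ha a hb rfl
    have hstep1 : ∀ e f : Event T X, (EvBefore u e f ∧ Dep e.1 f.1 ∧
        ¬(e.1.thread ≠ f.1.thread ∧ ∃ C ∈ 𝔹, ∃ C' ∈ 𝔹, C ≠ C' ∧ e ∈ C ∧ f ∈ C')) →
        EvBefore (p ++ B' ++ B ++ s) e f := by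
      rintro e f ⟨h1, h2, h3⟩
      have hwef : EvBefore (p ++ B ++ B' ++ s) e f :=
        hbhb e f (Relation.TransGen.single ⟨h1, h2, h3⟩)
      rcases swap_main rfl rfl hLD hwef with h | ⟨heB, hfB⟩
      · exact h
      · exfalso
        apply h3
        have heL : e.1 ∈ B := segEvents_label heB
        have hfL : f.1 ∈ B' := segEvents_label hfB
        refine ⟨hd _ heL _ hfL, segEvents p B, hBmem, segEvents (p ++ B) B', hB'mem,
          ?_, heB, hfB⟩
        intro hEq
        exact hLD _ heL (by rw [hEq] at heB; exact segEvents_label heB)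
    refine ⟨hperm.trans (perm_swap4 p B B' s), ?_, ?_⟩
    · intro e f h
      induction h with
      | single h => exact hstep1 _ _ h
      | tail _ h ih => exact evBefore_trans ih (hstep1 _ _ h)
    · intro C hC C' hC' hne hsv
      have helper : ∀ {D D' : Set (Event T X)}, D ∈ 𝔹 → D' ∈ 𝔹 →
          (∀ c ∈ D, ∀ c' ∈ D', EvBefore (p ++ B ++ B' ++ s) c c') →
          (∀ c ∈ D, ∀ c' ∈ D', EvBefore (p ++ B' ++ B ++ s) c c') ∨
          (∀ c ∈ D, ∀ c' ∈ D', EvBefore (p ++ B' ++ B ++ s) c' c) := by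
        intro D D' hD hD' h
        by_cases hA : D = segEvents p B ∧ D' = segEvents (p ++ B) B'
        · right
          obtain ⟨hA1, hA2⟩ := hA
          intro c hc c' hc'
          have hc2 : c ∈ segEvents (p ++ B') B := by
            rw [segEvents_shift hLD, ← hA1]; exact hc
          have hc'2 : c' ∈ segEvents p B' := by
            have hsh : segEvents (p ++ B) B' = segEvents p B' :=
              segEvents_shift (fun l hl hlB => hLD l hlB hl)
            rw [← hsh, ← hA2]; exact hc'
          exact seg_before rfl hc'2 hc2
        · left
          intro c hc c' hc'
          rcases swap_main rfl rfl hLD (h c hc c' hc') with hgood | ⟨h1, h2⟩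
          · exact hgood
          · exact absurd ⟨valid_inter (hval D hD) (hval _ hBmem) hc h1,
              valid_inter (hval D' hD') (hval _ hB'mem) hc' h2⟩ hA
      rcases hno C hC C' hC' hne hsv with h | h
      · exact helper hC hC' h
      · rcases helper hC' hC (fun c' hc' c hc => h c hc c' hc') with h' | h'
        · exact Or.inr (fun e he f hf => h' f hf e he)
        · exact Or.inl (fun e he f hf => h' f hf e he)
  | single p s a b ht hvb =>
    have hw : p ++ a :: b :: s = p ++ [a] ++ [b] ++ s := by simp
    have hw' : p ++ b :: a :: s = p ++ [b] ++ [a] ++ s := by simp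
    have hLD : ∀ l ∈ [a], l ∉ [b] := by
      intro l hl hl'
      simp at hl hl'
      subst hl; subst hl'
      exact ht rfl
    have hstep1 : ∀ e f : Event T X, (EvBefore u e f ∧ Dep e.1 f.1 ∧
        ¬(e.1.thread ≠ f.1.thread ∧ ∃ C ∈ 𝔹, ∃ C' ∈ 𝔹, C ≠ C' ∧ e ∈ C ∧ f ∈ C')) →
        EvBefore (p ++ b :: a :: s) e f := by
      rintro e f ⟨h1, h2, h3⟩
      have hwef : EvBefore (p ++ a :: b :: s) e f :=
        hbhb e f (Relation.TransGen.single ⟨h1, h2, h3⟩)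
      rcases swap_main hw hw' hLD hwef with h | ⟨heB, hfB⟩
      · exact h
      · exfalso
        have hea : e.1 = a := by have := segEvents_label heB; simpa using this
        have hfb : f.1 = b := by have := segEvents_label hfB; simpa using this
        rcases h2 with hth | ⟨hv, hop⟩
        · exact ht (by rw [← hea, ← hfb]; exact hth)
        · rcases hvb with hv' | ⟨ha, hb⟩
          · exact hv' (by rw [← hea, ← hfb]; exact hv)
          · rcases hop with hh | hh
            · rw [hea, ha] at hh; exact Op.noConfusion hh
            · rw [hfb, hb] at hh; exact Op.noConfusion hh
    refine ⟨hperm.trans ((List.Perm.swap b a s).append_left p), ?_, ?_⟩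
    · intro e f h
      induction h with
      | single h => exact hstep1 _ _ h
      | tail _ h ih => exact evBefore_trans ih (hstep1 _ _ h)
    · intro C hC C' hC' hne hsv
      have helper : ∀ {D D' : Set (Event T X)}, D ∈ 𝔹 → D' ∈ 𝔹 → SameVarBlocks D D' →
          (∀ c ∈ D, ∀ c' ∈ D', EvBefore (p ++ a :: b :: s) c c') →
          ∀ c ∈ D, ∀ c' ∈ D', EvBefore (p ++ b :: a :: s) c c' := by
        intro D D' hD hD' hsv2 h c hc c' hc'
        rcases swap_main hw hw' hLD (h c hc c' hc') with hg | ⟨h1, h2⟩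
        · exact hg
        · exfalso
          have hea : c.1 = a := by have := segEvents_label h1; simpa using this
          have hfb : c'.1 = b := by have := segEvents_label h2; simpa using this
          obtain ⟨x, hx, hx'⟩ := hsv2
          have hax : a.var = x := hea ▸ hx c hc
          have hbx : b.var = x := hfb ▸ hx' c' hc'
          have hvab : ¬ a.var ≠ b.var := by rw [hax, hbx]; simp
          rcases hvb with hv' | ⟨hard, hbrd⟩
          · exact hvab hv'
          -- both swapped labels are reads
          obtain ⟨e0, he0ev, he0w, hDeq⟩ := hval D hD
          obtain ⟨e0', he0ev', he0w', hD'eq⟩ := hval D' hD'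
          have hrfc : rf u e0 c := by
            rcases Set.mem_insert_iff.1 (hDeq ▸ hc) with hcc | hcc
            · exfalso
              have : c.1.op = Op.wr := hcc ▸ he0w
              rw [hea, hard] at this; exact Op.noConfusion this
            · exact hcc
          have hrfc' : rf u e0' c' := by
            rcases Set.mem_insert_iff.1 (hD'eq ▸ hc') with hcc | hcc
            · exfalso
              have : c'.1.op = Op.wr := hcc ▸ he0w'
              rw [hfb, hbrd] at this; exact Op.noConfusion this
            · exact hcc
          have he0'D' : e0' ∈ D' := by rw [hD'eq]; exact Set.mem_insert _ _
          have hbhb' : Bhb u 𝔹 e0' c' := by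
            refine Relation.TransGen.single ⟨rf_evBefore hrfc',
              Or.inr ⟨hrfc'.2.2.1, Or.inl hrfc'.1⟩, ?_⟩
            rintro ⟨-, B₁, hB₁, B₂, hB₂, h12, hm1, hm2⟩
            exact h12 ((valid_inter (hval B₁ hB₁) (hval D' hD') hm1 he0'D').trans
              (valid_inter (hval B₂ hB₂) (hval D' hD') hm2 (hD'eq ▸ hc')).symm)
          obtain ⟨i1, j1, hij1, he1, hf1⟩ := hbhb _ _ hbhb'
          obtain ⟨i2, j2, hij2, hi2, hj2⟩ := h c hc e0' he0'D'
          -- positions of c and c'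
          obtain ⟨ia, hia, hlta, hceq⟩ := segEvents_mem_evAt
            (w := p ++ a :: b :: s) (t := [b] ++ s) (by simp) h1
          obtain ⟨ib, hib, hltb, hc'eq⟩ := segEvents_mem_evAt
            (w := p ++ a :: b :: s) (t := s) (by simpa using hw) h2
          have hia0 : ia = 0 := by simp only [List.length_singleton] at hia; omega
          have hib0 : ib = 0 := by simp only [List.length_singleton] at hib; omega
          subst hia0; subst hib0
          have e1 : i2 = ⟨p.length + 0, hlta⟩ := evAt_inj (hi2.trans hceq)
          have e2 : j1 = ⟨(p ++ [a]).length + 0, hltb⟩ := evAt_inj (hf1.trans hc'eq)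
          have e3 : j2 = i1 := evAt_inj (hj2.trans he1.symm)
          have v1 : (i2 : ℕ) = p.length := by rw [e1]; simp
          have v2 : (j1 : ℕ) = p.length + 1 := by rw [e2]; simp
          have v3 : (j2 : ℕ) = (i1 : ℕ) := by rw [e3]
          omega
      rcases hno C hC C' hC' hne hsv with h | h
      · exact Or.inl (helper hC hC' hsv h)
      · refine Or.inr ?_
        have hsv' : SameVarBlocks C' C := by
          obtain ⟨x, hx, hx'⟩ := hsv; exact ⟨x, hx', hx⟩
        have := helper hC' hC hsv' (fun c' hc' c hc => h c hc c' hc')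
        exact fun e he f hf => this f hf e he

end Aux

/-- if `u ≡_𝔹 v` (with `𝔹` liberally atomic valid blocks of `u`)
then `v` is a proper linearization of `≺_𝔹`; hence `u ≊_𝔹 v` (both `u` and `v`
are proper linearizations of `≺_𝔹`). -/
theorem block_equiv_implies_proper_linearization
    (T X : Type) [DecidableEq T] [DecidableEq X]
    (u : Run T X) (𝔹 : Set (Set (Event T X)))
    (hval : ValidBlocks u 𝔹) (hla : LiberallyAtomic u 𝔹)
    (v : Run T X) (heq : BlkEquivIn 𝔹 u v) :
    ProperLin u 𝔹 (Bhb u 𝔹) v ∧ ProperLin u 𝔹 (Bhb u 𝔹) u := by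
  have base : ProperLin u 𝔹 (Bhb u 𝔹) u :=
    ⟨List.Perm.refl u, fun e f h => bhb_evBefore h, noOverlap_base hval⟩
  refine ⟨?_, base⟩
  induction heq with
  | refl => exact base
  | tail h1 hstep ih =>
    obtain ⟨a1, a2, a3⟩ := ih
    obtain ⟨b1, b2, b3⟩ := step_preserve hval hstep a1 a2 a3
    exact ⟨b1, b2, b3⟩

end TraceTheory
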